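/- arXiv:2305.02735 — 4 statements merged into one kernel-verified Lean document; each statement's English description precedes it below -/
import Mathlib

section
/- For every positive integer Δ and every integer s > 2, if N_s denotes the number of 2-cyclotomic cosets modulo 2^Δ−1 of size exactly s, then 3 divides N_s·s. -/
/-- The 2-cyclotomic coset of `a` modulo `n`: the orbit of `a` under multiplication by 2. -/
def cycCoset (n : ℕ) (a : ZMod n) : Set (ZMod n) := {x | ∃ j : ℕ, x = 2 ^ j * a}

/-- The number of 2-cyclotomic cosets modulo `n` of size exactly `s`. -/
noncomputable def Ncos (n s : ℕ) : ℕ :=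
  {C : Set (ZMod n) | (∃ a : ZMod n, C = cycCoset n a) ∧ C.ncard = s}.ncard

/-!
Write `n = 2 ^ Δ - 1`. The cosets of size `s` partition the points of minimal period `s` of
`a ↦ 2 * a` on `ZMod n`, so `Ncos n s * s` counts those points. For `d ∣ Δ`, the points of period
dividing `d` are the kernel of multiplication by `2 ^ d - 1`, a divisor of `n`, hence there are
`2 ^ d - 1` of them. Modulo 3, `2 ^ d - 1 ≡ [d odd] = ∑ e ∣ d, (δ e 1 - δ e 2)`, so by uniqueness of
Möbius inversion the number of points of minimal period `s` is `≡ δ s 1 - δ s 2 = 0` for `s > 2`.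
-/

open Finset Function

theorem eq_of_forall_sum_divisors_eq {M : Type*} [AddCancelCommMonoid M] {f g : ℕ → M} {n : ℕ}
    (hn : n ≠ 0) (h : ∀ d, d ∣ n → ∑ e ∈ d.divisors, f e = ∑ e ∈ d.divisors, g e) : f n = g n := by
  induction n using Nat.strong_induction_on with
  | _ n ih =>
    have hproper : ∑ e ∈ n.properDivisors, f e = ∑ e ∈ n.properDivisors, g e := by
      refine sum_congr rfl fun m hm => ?_
      obtain ⟨hmn, hlt⟩ := Nat.mem_properDivisors.mp hm
      exact ih m hlt (Nat.pos_of_mem_properDivisors hm).ne' fun d hd => h d (hd.trans hmn)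
    have := h n dvd_rfl
    rw [← Nat.cons_self_properDivisors hn, sum_cons, sum_cons, hproper] at this
    exact add_right_cancel this

section Orbits

variable {α : Type*} {f : α → α} {x y : α}

theorem ncard_range_iterate (hx : x ∈ periodicPts f) :
    (Set.range (f^[·] x)).ncard = minimalPeriod f x := by
  have hrange : Set.range (f^[·] x) = (f^[·] x) '' Set.Iio (minimalPeriod f x) := by
    refine (Set.image_subset_range _ _).antisymm' ?_
    rintro _ ⟨j, rfl⟩
    exact ⟨j % minimalPeriod f x, Nat.mod_lt _ (minimalPeriod_pos_of_mem_periodicPts hx),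
      iterate_mod_minimalPeriod_eq⟩
  rw [hrange, iterate_injOn_Iio_minimalPeriod.ncard_image, Set.ncard_Iio_nat]

theorem range_iterate_eq_of_mem (hx : x ∈ periodicPts f) (hy : y ∈ Set.range (f^[·] x)) :
    Set.range (f^[·] y) = Set.range (f^[·] x) := by
  obtain ⟨i, rfl⟩ := hy
  refine Set.Subset.antisymm ?_ ?_
  · rintro _ ⟨j, rfl⟩
    exact ⟨j + i, iterate_add_apply f j i x⟩
  · rintro _ ⟨j, rfl⟩
    have hp := minimalPeriod_pos_of_mem_periodicPts hx
    refine ⟨j + (minimalPeriod f x - 1) * i, ?_⟩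
    change f^[_] (f^[i] x) = f^[j] x
    rw [← iterate_add_apply, add_assoc, Nat.sub_one_mul,
      Nat.sub_add_cancel (Nat.le_mul_of_pos_left i hp), iterate_add_apply,
      ((isPeriodicPt_minimalPeriod f x).mul_const i).eq]

theorem ncard_setOf_range_iterate_mul [Fintype α] (hf : ∀ x, x ∈ periodicPts f) (s : ℕ) :
    {C : Set α | (∃ x, C = Set.range (f^[·] x)) ∧ C.ncard = s}.ncard * s =
      #{x | minimalPeriod f x = s} := by
  classical
  set T : Finset α := {x | minimalPeriod f x = s}
  have hC : {C : Set α | (∃ x, C = Set.range (f^[·] x)) ∧ C.ncard = s} =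
      ↑(T.image fun x => Set.range (f^[·] x)) := by
    ext C
    simp only [T, Set.mem_ofPred_eq, coe_image, coe_filter, mem_univ, true_and]
    constructor
    · rintro ⟨⟨x, rfl⟩, hC⟩
      exact ⟨x, (ncard_range_iterate (hf x)).symm.trans hC, rfl⟩
    · rintro ⟨x, hx, rfl⟩
      exact ⟨⟨x, rfl⟩, (ncard_range_iterate (hf x)).trans hx⟩
  have hfiber : ∀ C ∈ T.image fun x => Set.range (f^[·] x),
      #{x ∈ T | Set.range (f^[·] x) = C} = s := by
    simp only [mem_image]
    rintro _ ⟨y, hy, rfl⟩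
    have : (↑{x ∈ T | Set.range (f^[·] x) = Set.range (f^[·] y)} : Set α) =
        Set.range (f^[·] y) := by
      ext x
      simp only [T, coe_filter, mem_filter, mem_univ, true_and, Set.mem_ofPred_eq]
      constructor
      · rintro ⟨-, hxy⟩
        exact hxy ▸ ⟨0, rfl⟩
      · intro hxy
        refine ⟨?_, range_iterate_eq_of_mem (hf y) hxy⟩
        obtain ⟨i, rfl⟩ := hxy
        rw [minimalPeriod_apply_iterate (hf y), (mem_filter.mp hy).2]
    rw [← Set.ncard_coe_finset, this, ncard_range_iterate (hf y), (mem_filter.mp hy).2]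
  rw [hC, Set.ncard_coe_finset, card_eq_sum_card_image (fun x => Set.range (f^[·] x)) T,
    sum_const_nat hfiber]

theorem sum_card_minimalPeriod_eq [Fintype α] [DecidableEq α] {d : ℕ} (hd : d ≠ 0) :
    ∑ e ∈ d.divisors, #{x | minimalPeriod f x = e} = #{x | IsPeriodicPt f d x} := by
  rw [card_eq_sum_card_fiberwise (f := minimalPeriod f) (t := d.divisors)]
  · refine sum_congr rfl fun e he => ?_
    rw [filter_filter]
    refine congrArg card (filter_congr fun x _ => (and_iff_right_of_imp fun hx => ?_).symm)
    exact isPeriodicPt_iff_minimalPeriod_dvd.mpr (hx ▸ Nat.dvd_of_mem_divisors he)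
  · intro x hx
    exact Nat.mem_divisors.mpr ⟨(mem_filter.mp hx).2.minimalPeriod_dvd, hd⟩

end Orbits

theorem ZMod.card_nsmul_eq_zero (n k : ℕ) [NeZero n] : #{a : ZMod n | k • a = 0} = n.gcd k := by
  rw [← Fintype.card_subtype, ← Nat.card_eq_fintype_card]
  simpa using IsAddCyclic.card_nsmulAddMonoidHom_ker (ZMod n) k

theorem cycCoset_eq_range_iterate (n : ℕ) (a : ZMod n) :
    cycCoset n a = Set.range ((2 * ·)^[·] a) := by
  ext x
  simp [cycCoset, eq_comm]

theorem ZMod.two_pow_eq_one_mod_two_pow_sub_one (Δ : ℕ) : (2 : ZMod (2 ^ Δ - 1)) ^ Δ = 1 := by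
  have h := ZMod.natCast_self (2 ^ Δ - 1)
  rw [Nat.cast_sub Nat.one_le_two_pow] at h
  exact_mod_cast sub_eq_zero.mp h

theorem card_isPeriodicPt_two_mul (n d : ℕ) [NeZero n] :
    #{a : ZMod n | IsPeriodicPt (2 * ·) d a} = n.gcd (2 ^ d - 1) := by
  rw [← ZMod.card_nsmul_eq_zero]
  refine congrArg card (filter_congr fun a _ => ?_)
  rw [IsPeriodicPt, IsFixedPt, mul_left_iterate_apply, nsmul_eq_mul,
    Nat.cast_sub Nat.one_le_two_pow, sub_mul, sub_eq_zero]
  push_cast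
  simp

theorem sum_divisors_card_minimalPeriod_two_mul {n d : ℕ} [NeZero n] (hd : 2 ^ d - 1 ∣ n) :
    ∑ e ∈ d.divisors, #{a : ZMod n | minimalPeriod (2 * ·) a = e} = 2 ^ d - 1 := by
  have hd0 : d ≠ 0 := by
    rintro rfl
    exact NeZero.ne n (zero_dvd_iff.mp hd)
  rw [sum_card_minimalPeriod_eq hd0, card_isPeriodicPt_two_mul, Nat.gcd_eq_right hd]

theorem sum_divisors_single_one_sub_single_two {d : ℕ} (hd : d ≠ 0) :
    ∑ e ∈ d.divisors, (Pi.single 1 1 - Pi.single 2 1 : ℕ → ZMod 3) e =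
      ((2 ^ d - 1 : ℕ) : ZMod 3) := by
  simp only [Pi.sub_apply, sum_sub_distrib, sum_pi_single', Nat.mem_divisors, one_dvd, true_and,
    Nat.cast_sub Nat.one_le_two_pow, Nat.cast_pow, Nat.cast_ofNat, Nat.cast_one, if_pos hd,
    show (2 : ZMod 3) = -1 from rfl]
  rcases Nat.even_or_odd d with h | h
  · simp [h.two_dvd, h.neg_one_pow, hd]
  · simp [h.neg_one_pow, Nat.two_dvd_ne_zero.mpr (Nat.odd_iff.mp h)]
    decide

theorem three_dvd_Ncos_mul (Δ s : ℕ) (hΔ : 0 < Δ) (hs : 2 < s) :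
    3 ∣ Ncos (2 ^ Δ - 1) s * s := by
  have : NeZero (2 ^ Δ - 1) := ⟨by have := Nat.one_lt_two_pow hΔ.ne'; omega⟩
  have hperiodic (a : ZMod (2 ^ Δ - 1)) : IsPeriodicPt (2 * ·) Δ a := by
    rw [IsPeriodicPt, IsFixedPt, mul_left_iterate_apply,
      ZMod.two_pow_eq_one_mod_two_pow_sub_one, one_mul]
  simp_rw [Ncos, cycCoset_eq_range_iterate]
  rw [ncard_setOf_range_iterate_mul fun a => ⟨Δ, hΔ, hperiodic a⟩, ← ZMod.natCast_eq_zero_iff]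
  by_cases hsΔ : s ∣ Δ
  · have hcount := eq_of_forall_sum_divisors_eq
      (f := fun e => (#{a : ZMod (2 ^ Δ - 1) | minimalPeriod (2 * ·) a = e} : ZMod 3))
      (g := Pi.single 1 1 - Pi.single 2 1) (n := s) (by omega) fun d hd => by
        rw [sum_divisors_single_one_sub_single_two (ne_zero_of_dvd_ne_zero (by omega) hd),
          ← Nat.cast_sum, sum_divisors_card_minimalPeriod_two_mul
            (Nat.pow_sub_one_dvd_pow_sub_one 2 (hd.trans hsΔ))]
    rw [hcount]
    simp [hs.ne', (by omega : s ≠ 1).symm]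
  · rw [filter_false_of_mem fun a _ (h : minimalPeriod _ a = s) =>
      hsΔ (h ▸ (hperiodic a).minimalPeriod_dvd), card_empty, Nat.cast_zero]
end

section
/- Let Δ be odd and y an element of F_{2^Δ}, and let δ be a positive integer. Then Tr((y^{2^δ} + y^{2^{2δ}})(y + y^{2^{2δ}})) = 0 or Tr((y^{2^δ} + 1 + y^{2^{2δ}})(y + 1 + y^{2^{2δ}})) = 0. -/
/-!
Write `u = y^(2^δ)`, `v = y^(2^(2δ))`. Since `(a + 1)(b + 1) = ab + a + b + 1` and the trace is
invariant under Frobenius, the second trace equals the first plus `Tr(u + v) + Tr(y + v) + Tr 1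
= 2 Tr y + Tr 1 = Tr 1`, and `Tr 1 = Δ = 1` in `ZMod 2` because `Δ` is odd. So the two traces
differ by `1`, and one of them vanishes.
-/

theorem Algebra.trace_pow_card_pow {K L : Type*} [Field K] [Fintype K] [Field L] [Algebra K L]
    [Algebra.IsAlgebraic K L] (x : L) (n : ℕ) :
    Algebra.trace K L (x ^ Fintype.card K ^ n) = Algebra.trace K L x := by
  induction n with
  | zero => simp
  | succ n ih =>
    rw [pow_succ, pow_mul, ← FiniteField.frobeniusAlgEquivOfAlgebraic_apply K L,
      Algebra.trace_eq_of_algEquiv, ih]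

theorem GaloisField.trace_one_of_odd {n : ℕ} (hn : Odd n) :
    Algebra.trace (ZMod 2) (GaloisField 2 n) 1 = 1 := by
  rw [← map_one (algebraMap (ZMod 2) _), Algebra.trace_algebraMap,
    GaloisField.finrank 2 (Nat.pos_of_ne_zero (by rintro rfl; simp at hn)).ne', nsmul_one,
    ZMod.natCast_eq_one_iff_odd]
  exact hn

theorem LinearMap.map_add_one_mul_add_one {R L : Type*} [CommRing R] [CharP R 2] [Ring L]
    [Module R L] (T : L →ₗ[R] R) {a b : L} (h : T a = T b) :
    T ((a + 1) * (b + 1)) = T (a * b) + T 1 := by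
  rw [add_one_mul, mul_add_one, map_add, map_add, map_add, h, add_assoc, ← add_assoc (T b),
    CharTwo.add_self_eq_zero, zero_add]

theorem trace_frobenius_combination_general (Δ : ℕ) (hΔ : Odd Δ)
    (y : GaloisField 2 Δ) (δ : ℕ) :
    Algebra.trace (ZMod 2) (GaloisField 2 Δ)
      ((y ^ 2 ^ δ + y ^ 2 ^ (2 * δ)) * (y + y ^ 2 ^ (2 * δ))) = 0 ∨
    Algebra.trace (ZMod 2) (GaloisField 2 Δ)
      ((y ^ 2 ^ δ + 1 + y ^ 2 ^ (2 * δ)) * (y + 1 + y ^ 2 ^ (2 * δ))) = 0 := by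
  set T := Algebra.trace (ZMod 2) (GaloisField 2 Δ)
  have frobenius_invariant (n : ℕ) : T (y ^ 2 ^ n) = T y := by
    simpa only [ZMod.card] using Algebra.trace_pow_card_pow (K := ZMod 2) y n
  have linear_terms : T (y ^ 2 ^ δ + y ^ 2 ^ (2 * δ)) = T (y + y ^ 2 ^ (2 * δ)) := by
    rw [map_add, map_add, frobenius_invariant]
  rw [add_right_comm _ 1, add_right_comm y 1,
    LinearMap.map_add_one_mul_add_one T linear_terms, GaloisField.trace_one_of_odd hΔ]
  generalize T ((y ^ 2 ^ δ + y ^ 2 ^ (2 * δ)) * (y + y ^ 2 ^ (2 * δ))) = t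
  revert t
  decide

theorem trace_frobenius_combination (Δ : ℕ) (hΔ : Odd Δ)
    (y : GaloisField 2 Δ) (δ : ℕ) (hδ : 0 < δ) :
    Algebra.trace (ZMod 2) (GaloisField 2 Δ)
      ((y ^ 2 ^ δ + y ^ 2 ^ (2 * δ)) * (y + y ^ 2 ^ (2 * δ))) = 0 ∨
    Algebra.trace (ZMod 2) (GaloisField 2 Δ)
      ((y ^ 2 ^ δ + 1 + y ^ 2 ^ (2 * δ)) * (y + 1 + y ^ 2 ^ (2 * δ))) = 0 :=
  trace_frobenius_combination_general Δ hΔ y δ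
end

section
/- For every odd Δ > 1, there exists a partition of GR(4^Δ)\{0} into 2^Δ−1 triples of the form {a, 2a, 3a} and (2^Δ−1)(2^Δ−2)/6 sixtuples of the form {a, b, −a−b, −a, −b, a+b}, such that the partition is invariant under multiplication by any nonzero element of the Teichmüller set. -/
/-- The Teichmüller set of the ring `R` relative to the element `ξ`:
`{0} ∪ {1, ξ, ξ², …}`. -/
def Teich {R : Type*} [CommRing R] (ξ : R) : Set R :=
  insert 0 {x | ∃ i : ℕ, x = ξ ^ i}

/-- An axiomatization of the Galois ring `GR(4^Δ)` together with a generator `ξ`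
of the Teichmüller group: a commutative ring of characteristic 4 and cardinality `4^Δ`
in which `ξ` has multiplicative order `2^Δ - 1` and every element has a unique 2-adic
decomposition `a + 2b` with `a, b` in the Teichmüller set. -/
structure IsGaloisRing4 (Δ : ℕ) {R : Type*} [CommRing R] (ξ : R) : Prop where
  two_ne_zero : (2 : R) ≠ 0
  four_eq_zero : (4 : R) = 0
  card : Nat.card R = 4 ^ Δ
  ord : orderOf ξ = 2 ^ Δ - 1
  decomp : ∀ A : R, ∃! p : R × R, p.1 ∈ Teich ξ ∧ p.2 ∈ Teich ξ ∧ A = p.1 + 2 * p.2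

/-!
Every element of `R` is uniquely `τ d + 2 τ e` with digits `d, e` in the residue field
`𝔽 = R ⧸ (2)`, a field with `2 ^ Δ` elements, where `τ` is the multiplicative Teichmüller lift.
In digits, negation is `(d, e) ↦ (d, d + e)`, multiplication by `τ c` is `(d, e) ↦ (c d, c e)`,
and addition obeys the carry rule `τ (a²) + τ (b²) = τ (a² + b²) + 2 τ (a b)`.

So `{a, 2a, 3a}` becomes `{(α, 0), (0, α), (α, α)}`, and for distinct nonzero `α, β` the elements
with first digits `α, β, α + β` and common second digit `s`, `s² = α² + αβ + β²`, sum to zero;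
with their negatives they form a sextuple depending only on the plane `{0, α, β, α + β}`. The
point `(d, e)`, `e ∉ {0, d}`, lies in the sextuple of the plane spanned by `d` and `β` iff
`β² + dβ ∈ {e², e² + d²}`. As `Δ` is odd, `z² + z = 1` has no root in `𝔽` (it would be a
primitive cube root of unity), so exactly one of these two Artin–Schreier equations is solvable,
and the plane is unique: the cells partition `R \ {0}`. Both kinds of cells are visibly stable
under `(d, e) ↦ (c d, c e)`, and counting points gives the numbers of cells.
-/

open Set

namespace Set

theorem PairwiseDisjoint.image_of_injective {α β : Type*} {f : α → β}
    (hf : Function.Injective f) {P : Set (Set α)} (hP : P.PairwiseDisjoint id) :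
    (image f '' P).PairwiseDisjoint id := by
  rintro _ ⟨C, hC, rfl⟩ _ ⟨D, hD, rfl⟩ hne
  exact (disjoint_image_iff hf).2 (hP hC hD fun h => hne (h ▸ rfl))

theorem ncard_sep_image_image {α β : Type*} {f : α → β} (hf : Function.Injective f)
    (P : Set (Set α)) (k : ℕ) :
    {C ∈ image f '' P | C.ncard = k}.ncard = {C ∈ P | C.ncard = k}.ncard := by
  have : {C ∈ image f '' P | C.ncard = k} = image f '' {C ∈ P | C.ncard = k} := by
    ext D
    constructor
    · rintro ⟨⟨C, hC, rfl⟩, hk⟩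
      exact ⟨C, ⟨hC, by rwa [ncard_image_of_injective _ hf] at hk⟩, rfl⟩
    · rintro ⟨C, ⟨hC, hk⟩, rfl⟩
      exact ⟨⟨C, hC, rfl⟩, by rwa [ncard_image_of_injective _ hf]⟩
  rw [this, ncard_image_of_injective _ (image_injective.2 hf)]

theorem ncard_sUnion_of_ncard_eq_or_eq {α : Type*} [Finite α] {P : Set (Set α)}
    (hP : P.PairwiseDisjoint id) {k l : ℕ} (hkl : k ≠ l)
    (h : ∀ C ∈ P, C.ncard = k ∨ C.ncard = l) :
    (⋃₀ P).ncard = k * {C ∈ P | C.ncard = k}.ncard + l * {C ∈ P | C.ncard = l}.ncard := by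
  have hsplit : P = {C ∈ P | C.ncard = k} ∪ {C ∈ P | C.ncard = l} := by
    rw [← sep_or, sep_eq_self_iff_mem_true.2 h]
  have hconst (S : Set (Set α)) (m : ℕ) (hS : ∀ C ∈ S, C.ncard = m) :
      ∑ᶠ C ∈ S, C.ncard = m * S.ncard := by
    rw [finsum_mem_congr rfl hS, ← finsum_one, mul_finsum_mem, mul_one]
  have hsum := (toFinite P).ncard_biUnion (s := id) (fun _ _ => toFinite _) hP
  simp only [id] at hsum
  rw [sUnion_eq_biUnion, hsum]
  conv_lhs => rw [hsplit]
  rw [finsum_mem_union _ (toFinite _) (toFinite _), hconst _ k fun C hC => hC.2,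
    hconst _ l fun C hC => hC.2]
  exact disjoint_left.2 fun C hk hl => hkl (hk.2.symm.trans hl.2)

end Set

section CharTwo

theorem sq_add_mul_eq_sq_add_mul_iff {F : Type*} [CommRing F] [NoZeroDivisors F] [CharP F 2]
    {d t u : F} : t ^ 2 + d * t = u ^ 2 + d * u ↔ t = u ∨ t = u + d := by
  have key : t ^ 2 + d * t - (u ^ 2 + d * u) = (t - u) * (t - (u + d)) := by
    linear_combination (d * t + t * u - u ^ 2 - d * u) * CharTwo.two_eq_zero (R := F)
  rw [← sub_eq_zero, key, mul_eq_zero, sub_eq_zero, sub_eq_zero]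

variable {F : Type*} [Field F] [CharP F 2]

theorem sq_add_self_ne_one_of_odd [Finite F] {n : ℕ} (hq : Nat.card F = 2 ^ n) (hn : Odd n)
    (z : F) : z ^ 2 + z ≠ 1 := by
  intro hz
  have := Fintype.ofFinite F
  have hz0 : z ≠ 0 := by rintro rfl; simp at hz
  have hz1 : z ≠ 1 := by rintro rfl; exact one_ne_zero (by linear_combination hz)
  have hz3 : z ^ 3 = 1 := by linear_combination (z + 1) * hz - z ^ 2 * CharTwo.two_eq_zero (R := F)
  have h3 : 3 ∣ 2 ^ n - 1 := by
    rw [← hq, Nat.card_eq_fintype_card, ← orderOf_eq_prime hz3 hz1]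
    exact orderOf_dvd_of_pow_eq_one (FiniteField.pow_card_sub_one_eq_one z hz0)
  obtain ⟨m, rfl⟩ := hn
  have h2 : 2 ^ (2 * m + 1) % 3 = 2 := by
    rw [pow_succ, pow_mul, Nat.mul_mod, Nat.pow_mod]; norm_num
  generalize 2 ^ (2 * m + 1) = N at h2 h3
  omega

theorem exists_sq_add_self_eq_or_eq_add_one [Finite F] (hF : ∀ z : F, z ^ 2 + z ≠ 1) (v : F) :
    (∃ r, r ^ 2 + r = v) ∨ ∃ r, r ^ 2 + r = v + 1 := by
  let φ : F →+ F := (frobenius F 2).toAddMonoidHom + AddMonoidHom.id F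
  have hker : (φ.ker : Set F) = {0, 1} := by
    ext r
    change r ^ 2 + r = 0 ↔ r = 0 ∨ r = 1
    rw [← CharTwo.add_eq_zero (b := 1), ← mul_eq_zero]
    ring_nf
  have hindex : φ.range.index = 2 := by
    rw [AddSubgroup.index_range, ← SetLike.coe_sort_coe, hker, Nat.card_coe_set_eq,
      ncard_pair zero_ne_one]
  have h1 : (1 : F) ∉ φ.range := fun ⟨r, hr⟩ => hF r hr
  by_cases hv : v ∈ φ.range
  · obtain ⟨r, hr⟩ := hv
    exact Or.inl ⟨r, hr⟩
  · obtain ⟨r, hr⟩ := (AddSubgroup.add_mem_iff_of_index_two hindex).2 (iff_of_false hv h1)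
    exact Or.inr ⟨r, hr⟩

theorem sq_add_mul_ne_sq_add_mul_add_sq (hF : ∀ z : F, z ^ 2 + z ≠ 1) {d : F} (hd : d ≠ 0)
    (t u : F) : t ^ 2 + d * t ≠ u ^ 2 + d * u + d ^ 2 := by
  intro h
  apply hF ((t + u) / d)
  field_simp
  linear_combination h + (t * u + u ^ 2 + d * u) * CharTwo.two_eq_zero (R := F)

theorem exists_sq_add_mul_eq_or_eq_add_sq [Finite F] (hF : ∀ z : F, z ^ 2 + z ≠ 1) {d : F}
    (hd : d ≠ 0) (w : F) : ∃ t, t ^ 2 + d * t = w ∨ t ^ 2 + d * t = w + d ^ 2 := by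
  refine (exists_sq_add_self_eq_or_eq_add_one hF (w / d ^ 2)).elim
    (fun ⟨r, hr⟩ => ⟨r * d, Or.inl ?_⟩) (fun ⟨r, hr⟩ => ⟨r * d, Or.inr ?_⟩) <;>
  · field_simp at hr
    linear_combination hr

end CharTwo

namespace DigitCells

def triple {F : Type*} [Zero F] (α : F) : Set (F × F) := {(α, 0), (0, α), (α, α)}

theorem image_smul_triple {F : Type*} [MulZeroClass F] (c α : F) :
    (c • ·) '' triple α = triple (c * α) := by
  simp [triple, image_insert_eq]

section Triple

variable {F : Type*} [Zero F]

theorem ncard_triple {α : F} (hα : α ≠ 0) : (triple α).ncard = 3 := by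
  rw [triple, ncard_insert_of_notMem, ncard_pair] <;> simp [hα, Ne.symm hα]

theorem eq_of_mem_triple {α α' : F} (hα : α ≠ 0) {p : F × F} (h : p ∈ triple α)
    (h' : p ∈ triple α') : α = α' := by
  simp only [triple, mem_insert_iff, mem_singleton_iff] at h h'
  rcases h with rfl | rfl | rfl <;> rcases h' with h' | h' | h' <;> simp_all [Prod.ext_iff]

end Triple

section Sextuple

variable {F : Type*} [Field F] [CharP F 2] [PerfectRing F 2]

noncomputable def sextupleDigit (α β : F) : F :=
  (frobeniusEquiv F 2).symm (α ^ 2 + α * β + β ^ 2)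

noncomputable def sextuple (α β : F) : Set (F × F) :=
  let s := sextupleDigit α β
  {(α, s), (β, s), (α + β, s), (α, α + s), (β, β + s), (α + β, α + β + s)}

theorem sextupleDigit_sq (α β : F) : sextupleDigit α β ^ 2 = α ^ 2 + α * β + β ^ 2 :=
  frobeniusEquiv_symm_pow_p F 2 _

theorem sextupleDigit_comm (α β : F) : sextupleDigit α β = sextupleDigit β α := by
  rw [← CharTwo.sq_inj, sextupleDigit_sq, sextupleDigit_sq]
  ring

theorem sextupleDigit_add_right (α β : F) : sextupleDigit α (α + β) = sextupleDigit α β := by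
  rw [← CharTwo.sq_inj, sextupleDigit_sq, sextupleDigit_sq]
  linear_combination (α ^ 2 + α * β) * CharTwo.two_eq_zero (R := F)

theorem sextupleDigit_mul (c α β : F) :
    sextupleDigit (c * α) (c * β) = c * sextupleDigit α β := by
  rw [← CharTwo.sq_inj, mul_pow, sextupleDigit_sq, sextupleDigit_sq]
  ring

theorem mem_sextuple_iff {α β : F} {p : F × F} :
    p ∈ sextuple α β ↔ (p.1 = α ∨ p.1 = β ∨ p.1 = α + β) ∧
      (p.2 = sextupleDigit α β ∨ p.2 = p.1 + sextupleDigit α β) := by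
  obtain ⟨d, e⟩ := p
  simp only [sextuple, mem_insert_iff, mem_singleton_iff, Prod.mk.injEq]
  constructor
  · rintro (⟨rfl, rfl⟩ | ⟨rfl, rfl⟩ | ⟨rfl, rfl⟩ | ⟨rfl, rfl⟩ | ⟨rfl, rfl⟩ | ⟨rfl, rfl⟩) <;> simp
  · rintro ⟨rfl | rfl | rfl, rfl | rfl⟩ <;> simp

theorem sextuple_comm (α β : F) : sextuple α β = sextuple β α := by
  ext p
  simp only [mem_sextuple_iff, sextupleDigit_comm α β, add_comm α β]
  tauto

theorem sextuple_add_right (α β : F) : sextuple α (α + β) = sextuple α β := by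
  ext p
  simp only [mem_sextuple_iff, sextupleDigit_add_right, CharTwo.add_cancel_left]
  tauto

theorem image_smul_sextuple (c α β : F) :
    (c • ·) '' sextuple α β = sextuple (c * α) (c * β) := by
  simp [sextuple, image_insert_eq, sextupleDigit_mul, mul_add]

theorem ncard_sextuple {α β : F} (hα : α ≠ 0) (hβ : β ≠ 0) (hαβ : α ≠ β) :
    (sextuple α β).ncard = 6 := by
  have : α + β ≠ 0 := by rwa [Ne, CharTwo.add_eq_zero]
  rw [sextuple, ncard_insert_of_notMem, ncard_insert_of_notMem, ncard_insert_of_notMem,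
    ncard_insert_of_notMem, ncard_pair] <;> simp [*, Ne.symm hαβ]

theorem mk_mem_sextuple_iff {d e β : F} :
    (d, e) ∈ sextuple d β ↔ e ^ 2 = β ^ 2 + d * β + d ^ 2 ∨ e ^ 2 = β ^ 2 + d * β := by
  have h1 : d ^ 2 + d * β + β ^ 2 = β ^ 2 + d * β + d ^ 2 := by ring
  have h2 : d ^ 2 + (d ^ 2 + d * β + β ^ 2) = β ^ 2 + d * β := by
    linear_combination d ^ 2 * CharTwo.two_eq_zero (R := F)
  rw [mem_sextuple_iff, ← CharTwo.sq_inj (x := e), ← CharTwo.sq_inj (x := e), CharTwo.add_sq,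
    sextupleDigit_sq, h2, h1]
  simp

theorem eq_zero_or_eq_iff_of_mk_mem_sextuple (hF : ∀ z : F, z ^ 2 + z ≠ 1) {d e β : F}
    (hd : d ≠ 0) (h : (d, e) ∈ sextuple d β) : e = 0 ∨ e = d ↔ β = 0 ∨ β = d := by
  have hβ : β = 0 ∨ β = d ↔ β ^ 2 + d * β = 0 := by
    simpa using (sq_add_mul_eq_sq_add_mul_iff (t := β) (u := 0) (d := d)).symm
  have he : e = 0 ∨ e = d ↔ e ^ 2 = 0 ∨ e ^ 2 = d ^ 2 := by
    rw [CharTwo.sq_inj, pow_eq_zero_iff two_ne_zero]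
  have hne : β ^ 2 + d * β ≠ d ^ 2 := by
    simpa using sq_add_mul_ne_sq_add_mul_add_sq hF hd β 0
  rw [hβ, he]
  rcases mk_mem_sextuple_iff.1 h with h | h <;> rw [h]
  · constructor
    · rintro (h' | h')
      · exact absurd (by linear_combination h' - d ^ 2 * CharTwo.two_eq_zero (R := F)) hne
      · linear_combination h'
    · intro h'; right; rw [h']; ring
  · constructor
    · rintro (h' | h')
      · exact h'
      · exact absurd h' hne
    · exact Or.inl

theorem sextuple_eq_of_mk_mem (hF : ∀ z : F, z ^ 2 + z ≠ 1) {d e β β' : F} (hd : d ≠ 0)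
    (h : (d, e) ∈ sextuple d β) (h' : (d, e) ∈ sextuple d β') :
    sextuple d β = sextuple d β' := by
  rw [mk_mem_sextuple_iff] at h h'
  have hne := sq_add_mul_ne_sq_add_mul_add_sq hF hd
  have key : β ^ 2 + d * β = β' ^ 2 + d * β' := by
    rcases h with h | h <;> rcases h' with h' | h'
    · linear_combination h' - h
    · exact absurd (by linear_combination h - h') (hne β' β)
    · exact absurd (by linear_combination h' - h) (hne β β')
    · linear_combination h' - h
  rcases sq_add_mul_eq_sq_add_mul_iff.1 key with rfl | rfl
  · rfl
  · rw [add_comm, sextuple_add_right]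

theorem exists_mk_mem_sextuple [Finite F] (hF : ∀ z : F, z ^ 2 + z ≠ 1) {d : F} (hd : d ≠ 0)
    (e : F) : ∃ β, (d, e) ∈ sextuple d β := by
  obtain ⟨t, ht | ht⟩ := exists_sq_add_mul_eq_or_eq_add_sq hF hd (e ^ 2)
  · exact ⟨t, mk_mem_sextuple_iff.2 (Or.inr ht.symm)⟩
  · refine ⟨t, mk_mem_sextuple_iff.2 (Or.inl ?_)⟩
    linear_combination -ht - d ^ 2 * CharTwo.two_eq_zero (R := F)

theorem exists_sextuple_eq_of_mem {α β : F} (hα : α ≠ 0) (hβ : β ≠ 0) (hαβ : α ≠ β)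
    {p : F × F} (hp : p ∈ sextuple α β) :
    p.1 ≠ 0 ∧ ∃ γ, γ ≠ 0 ∧ γ ≠ p.1 ∧ sextuple α β = sextuple p.1 γ := by
  rcases (mem_sextuple_iff.1 hp).1 with h | h | h <;> rw [h]
  · exact ⟨hα, β, hβ, hαβ.symm, rfl⟩
  · exact ⟨hβ, α, hα, hαβ, sextuple_comm α β⟩
  · refine ⟨by rwa [Ne, CharTwo.add_eq_zero], α, hα, mt left_eq_add.1 hβ, ?_⟩
    rw [sextuple_comm (α + β), sextuple_add_right]

theorem mem_sextuple_ne (hF : ∀ z : F, z ^ 2 + z ≠ 1) {α β : F} (hα : α ≠ 0) (hβ : β ≠ 0)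
    (hαβ : α ≠ β) {p : F × F} (hp : p ∈ sextuple α β) : p.1 ≠ 0 ∧ p.2 ≠ 0 ∧ p.2 ≠ p.1 := by
  obtain ⟨hd, γ, hγ, hγd, heq⟩ := exists_sextuple_eq_of_mem hα hβ hαβ hp
  rw [heq] at hp
  have h := (eq_zero_or_eq_iff_of_mk_mem_sextuple hF hd hp).not
  simp only [not_or] at h
  exact ⟨hd, h.2 ⟨hγ, hγd⟩⟩

variable (F) in
def cells : Set (Set (F × F)) :=
  {C | (∃ α, α ≠ 0 ∧ C = triple α) ∨ ∃ α β, α ≠ 0 ∧ β ≠ 0 ∧ α ≠ β ∧ C = sextuple α β}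

theorem disjoint_triple_sextuple (hF : ∀ z : F, z ^ 2 + z ≠ 1) (γ : F) {α β : F} (hα : α ≠ 0)
    (hβ : β ≠ 0) (hαβ : α ≠ β) : Disjoint (triple γ) (sextuple α β) := by
  refine disjoint_left.2 fun p hp hp' => ?_
  obtain ⟨h1, h2, h3⟩ := mem_sextuple_ne hF hα hβ hαβ hp'
  simp only [triple, mem_insert_iff, mem_singleton_iff] at hp
  rcases hp with rfl | rfl | rfl <;> simp_all

theorem eq_of_mem_cells (hF : ∀ z : F, z ^ 2 + z ≠ 1) {C D : Set (F × F)} (hC : C ∈ cells F)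
    (hD : D ∈ cells F) {p : F × F} (hpC : p ∈ C) (hpD : p ∈ D) : C = D := by
  rcases hC with ⟨α, hα, rfl⟩ | ⟨α, β, hα, hβ, hαβ, rfl⟩ <;>
    rcases hD with ⟨α', hα', rfl⟩ | ⟨α', β', hα', hβ', hαβ', rfl⟩
  · rw [eq_of_mem_triple hα hpC hpD]
  · exact absurd hpD (disjoint_left.1 (disjoint_triple_sextuple hF α hα' hβ' hαβ') hpC)
  · exact absurd hpC (disjoint_left.1 (disjoint_triple_sextuple hF α' hα hβ hαβ) hpD)
  · obtain ⟨hd, γ, -, -, heq⟩ := exists_sextuple_eq_of_mem hα hβ hαβ hpC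
    obtain ⟨-, γ', -, -, heq'⟩ := exists_sextuple_eq_of_mem hα' hβ' hαβ' hpD
    rw [heq] at hpC ⊢
    rw [heq'] at hpD ⊢
    exact sextuple_eq_of_mk_mem hF hd hpC hpD

theorem pairwiseDisjoint_cells (hF : ∀ z : F, z ^ 2 + z ≠ 1) : (cells F).PairwiseDisjoint id :=
  fun _ hC _ hD hCD => disjoint_left.2 fun _ hpC hpD => hCD (eq_of_mem_cells hF hC hD hpC hpD)

theorem sUnion_cells [Finite F] (hF : ∀ z : F, z ^ 2 + z ≠ 1) : ⋃₀ cells F = {p | p ≠ 0} := by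
  ext ⟨d, e⟩
  simp only [mem_sUnion, mem_ofPred_eq, ne_eq, Prod.mk_eq_zero, not_and_or]
  constructor
  · rintro ⟨C, ⟨α, hα, rfl⟩ | ⟨α, β, hα, hβ, hαβ, rfl⟩, hp⟩
    · simp only [triple, mem_insert_iff, mem_singleton_iff, Prod.mk.injEq] at hp
      rcases hp with ⟨rfl, rfl⟩ | ⟨rfl, rfl⟩ | ⟨rfl, rfl⟩ <;> simp [hα]
    · exact Or.inl (mem_sextuple_ne hF hα hβ hαβ hp).1
  · intro hp
    by_cases hd : d = 0
    · subst hd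
      have he : e ≠ 0 := by simpa using hp
      exact ⟨triple e, Or.inl ⟨e, he, rfl⟩, by simp [triple]⟩
    by_cases he : e = 0 ∨ e = d
    · refine ⟨triple d, Or.inl ⟨d, hd, rfl⟩, ?_⟩
      rcases he with rfl | rfl <;> simp [triple]
    · obtain ⟨β, hβ⟩ := exists_mk_mem_sextuple hF hd e
      have hβ' := (eq_zero_or_eq_iff_of_mk_mem_sextuple hF hd hβ).not.1 he
      simp only [not_or] at hβ'
      exact ⟨_, Or.inr ⟨d, β, hd, hβ'.1, Ne.symm hβ'.2, rfl⟩, hβ⟩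

theorem image_smul_mem_cells {c : F} (hc : c ≠ 0) {C : Set (F × F)} (hC : C ∈ cells F) :
    (c • ·) '' C ∈ cells F := by
  rcases hC with ⟨α, hα, rfl⟩ | ⟨α, β, hα, hβ, hαβ, rfl⟩
  · exact Or.inl ⟨c * α, mul_ne_zero hc hα, image_smul_triple c α⟩
  · exact Or.inr ⟨c * α, c * β, mul_ne_zero hc hα, mul_ne_zero hc hβ,
      (mul_right_injective₀ hc).ne hαβ, image_smul_sextuple c α β⟩

theorem ncard_cells_three [Finite F] : {C ∈ cells F | C.ncard = 3}.ncard = Nat.card F - 1 := by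
  have h : {C ∈ cells F | C.ncard = 3} = triple '' {0}ᶜ := by
    ext C
    constructor
    · rintro ⟨⟨α, hα, rfl⟩ | ⟨α, β, hα, hβ, hαβ, rfl⟩, h3⟩
      · exact ⟨α, hα, rfl⟩
      · exact absurd h3 (by rw [ncard_sextuple hα hβ hαβ]; norm_num)
    · rintro ⟨α, hα, rfl⟩
      exact ⟨Or.inl ⟨α, hα, rfl⟩, ncard_triple hα⟩
  have hinj : InjOn triple ({0}ᶜ : Set F) := fun α hα α' _ hαα' =>
    eq_of_mem_triple hα (mem_insert _ _) (hαα' ▸ mem_insert _ _)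
  rw [h, hinj.ncard_image, ncard_compl, ncard_singleton]

theorem ncard_cells_six [Finite F] (hF : ∀ z : F, z ^ 2 + z ≠ 1) :
    {C ∈ cells F | C.ncard = 6}.ncard = (Nat.card F - 1) * (Nat.card F - 2) / 6 := by
  have hsum := ncard_sUnion_of_ncard_eq_or_eq (pairwiseDisjoint_cells hF) (by norm_num : 3 ≠ 6)
    fun C hC => hC.elim (fun ⟨α, hα, hC⟩ => Or.inl (hC ▸ ncard_triple hα))
      fun ⟨α, β, hα, hβ, hαβ, hC⟩ => Or.inr (hC ▸ ncard_sextuple hα hβ hαβ)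
  rw [sUnion_cells hF, ← compl_singleton_eq, ncard_compl, ncard_singleton, Nat.card_prod,
    ncard_cells_three] at hsum
  -- `hsum` now reads `q² - 1 = 3 (q - 1) + 6 · #sextuples` with `q = Nat.card F ≥ 2`
  have hq := Finite.one_lt_card (α := F)
  generalize Nat.card F = q at hsum hq ⊢
  obtain ⟨m, rfl⟩ : ∃ m, q = m + 2 := ⟨q - 2, by omega⟩
  have h1 : (m + 2) * (m + 2) - 1 = m * m + 4 * m + 3 := by ring_nf; omega
  rw [h1, show m + 2 - 1 = m + 1 by omega] at hsum
  rw [show m + 2 - 1 = m + 1 by omega, show m + 2 - 2 = m by omega,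
    Nat.div_eq_of_eq_mul_left (by norm_num)]
  nlinarith

theorem exists_image_sextuple_eq {R : Type*} [CommRing R]
    {η : F × F → R} (hneg : ∀ d e, -η (d, e) = η (d, d + e))
    (hcarry : ∀ a b s, η (a ^ 2, s) + η (b ^ 2, s) = η (a ^ 2 + b ^ 2, a * b)) (α β : F) :
    ∃ x y, η '' sextuple α β = {x, y, -x - y, -x, -y, x + y} := by
  obtain ⟨a, rfl⟩ : ∃ a, a ^ 2 = α := ⟨_, frobeniusEquiv_symm_pow_p F 2 α⟩
  obtain ⟨b, rfl⟩ : ∃ b, b ^ 2 = β := ⟨_, frobeniusEquiv_symm_pow_p F 2 β⟩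
  set s := sextupleDigit (a ^ 2) (b ^ 2)
  have hs : a ^ 2 + b ^ 2 + s = a * b := by
    rw [← CharTwo.sq_inj, CharTwo.add_sq, CharTwo.add_sq, sextupleDigit_sq]
    linear_combination (a ^ 4 + b ^ 4) * CharTwo.two_eq_zero (R := F)
  have hz : η (a ^ 2 + b ^ 2, s) = -η (a ^ 2, s) - η (b ^ 2, s) := by
    rw [← neg_add', hcarry, ← hs, hneg, CharTwo.add_cancel_left]
  refine ⟨η (a ^ 2, s), η (b ^ 2, s), ?_⟩
  simp only [sextuple, image_insert_eq, image_singleton]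
  rw [← hneg, ← hneg, ← hneg, hz]
  congr 6
  ring

end Sextuple

end DigitCells

open DigitCells

section Teichmuller

variable {R : Type*} [CommRing R]

local notation "𝔽" => R ⧸ Ideal.span {(2 : R)}
local notation "π" => Ideal.Quotient.mk (Ideal.span {(2 : R)})

theorem residue_two_eq_zero : (2 : 𝔽) = 0 := by
  rw [← map_ofNat π 2, Ideal.Quotient.mk_singleton_self]

theorem two_mul_eq_of_mk_eq (h4 : (4 : R) = 0) {x y : R} (h : π x = π y) : 2 * x = 2 * y := by
  obtain ⟨c, hc⟩ := Ideal.mem_span_singleton'.1 (Ideal.Quotient.eq.1 h)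
  linear_combination 2 * hc.symm + c * h4

theorem sq_eq_of_mk_eq (h4 : (4 : R) = 0) {x y : R} (h : π x = π y) : x ^ 2 = y ^ 2 := by
  obtain ⟨c, hc⟩ := Ideal.mem_span_singleton'.1 (Ideal.Quotient.eq.1 h)
  linear_combination (x + y + 2 * c) * hc.symm + (c ^ 2 + c * y) * h4

variable {ξ : R}

theorem zero_mem_teich : (0 : R) ∈ Teich ξ := mem_insert _ _

theorem one_mem_teich : (1 : R) ∈ Teich ξ := mem_insert_of_mem _ ⟨0, (pow_zero ξ).symm⟩

theorem mul_mem_teich {a b : R} (ha : a ∈ Teich ξ) (hb : b ∈ Teich ξ) : a * b ∈ Teich ξ := by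
  rcases ha with rfl | ⟨i, rfl⟩
  · simpa using zero_mem_teich
  rcases hb with rfl | ⟨j, rfl⟩
  · simpa using zero_mem_teich
  exact mem_insert_of_mem _ ⟨i + j, (pow_add ξ i j).symm⟩

variable (ξ) in
noncomputable def teichLift (z : 𝔽) : R := Function.invFunOn π (Teich ξ) z

variable (ξ) in
noncomputable def ofTeichDigits (p : 𝔽 × 𝔽) : R := teichLift ξ p.1 + 2 * teichLift ξ p.2

namespace IsGaloisRing4

variable {Δ : ℕ} (hGR : IsGaloisRing4 Δ ξ)
include hGR

theorem injOn_mk_teich : InjOn π (Teich ξ) := by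
  intro a ha b hb h
  obtain ⟨c, hc⟩ := Ideal.mem_span_singleton'.1 (Ideal.Quotient.eq.1 h)
  obtain ⟨⟨t, u⟩, ⟨ht, -, rfl⟩, -⟩ := hGR.decomp c
  have := (hGR.decomp a).unique (y₁ := (a, 0)) (y₂ := (b, t)) ⟨ha, zero_mem_teich, by ring⟩
    ⟨hb, ht, by linear_combination -hc + u * hGR.four_eq_zero⟩
  exact congrArg Prod.fst this

theorem exists_mem_teich_mk_eq (z : 𝔽) : ∃ a ∈ Teich ξ, π a = z := by
  obtain ⟨A, rfl⟩ := Ideal.Quotient.mk_surjective z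
  obtain ⟨⟨a, b⟩, ⟨ha, -, rfl⟩, -⟩ := hGR.decomp A
  exact ⟨a, ha, by simp⟩

theorem teichLift_mem (z : 𝔽) : teichLift ξ z ∈ Teich ξ :=
  Function.invFunOn_mem (hGR.exists_mem_teich_mk_eq z)

theorem mk_teichLift (z : 𝔽) : π (teichLift ξ z) = z :=
  Function.invFunOn_eq (hGR.exists_mem_teich_mk_eq z)

theorem teichLift_injective : Function.Injective (teichLift ξ) :=
  Function.LeftInverse.injective hGR.mk_teichLift

theorem teichLift_mk {a : R} (ha : a ∈ Teich ξ) : teichLift ξ (π a) = a :=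
  hGR.injOn_mk_teich.leftInvOn_invFunOn ha

theorem teichLift_zero : teichLift ξ (0 : 𝔽) = 0 := by
  simpa using hGR.teichLift_mk zero_mem_teich

theorem teichLift_mul (z w : 𝔽) : teichLift ξ (z * w) = teichLift ξ z * teichLift ξ w := by
  rw [← hGR.teichLift_mk (mul_mem_teich (hGR.teichLift_mem z) (hGR.teichLift_mem w)), map_mul,
    hGR.mk_teichLift, hGR.mk_teichLift]

theorem two_mul_teichLift_add (z w : 𝔽) :
    2 * teichLift ξ (z + w) = 2 * teichLift ξ z + 2 * teichLift ξ w := by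
  rw [← mul_add]
  exact two_mul_eq_of_mk_eq hGR.four_eq_zero (by simp [hGR.mk_teichLift])

theorem teichLift_sq_add_teichLift_sq (a b : 𝔽) :
    teichLift ξ (a ^ 2) + teichLift ξ (b ^ 2) =
      teichLift ξ (a ^ 2 + b ^ 2) + 2 * teichLift ξ (a * b) := by
  have hsq (z : 𝔽) : teichLift ξ (z ^ 2) = teichLift ξ z ^ 2 := by rw [sq, hGR.teichLift_mul, sq]
  have hab : a ^ 2 + b ^ 2 = (a + b) ^ 2 := by
    linear_combination (-(a * b)) * residue_two_eq_zero (R := R)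
  have hcarry : (teichLift ξ a + teichLift ξ b) ^ 2 = teichLift ξ (a + b) ^ 2 :=
    sq_eq_of_mk_eq hGR.four_eq_zero (by simp [hGR.mk_teichLift])
  rw [hsq, hsq, hab, hsq, hGR.teichLift_mul]
  linear_combination hcarry - teichLift ξ a * teichLift ξ b * hGR.four_eq_zero

theorem ofTeichDigits_bijective : Function.Bijective (ofTeichDigits ξ) := by
  refine ⟨fun ⟨d, e⟩ ⟨d', e'⟩ h => ?_, fun A => ?_⟩
  · have := (hGR.decomp _).unique (y₁ := (teichLift ξ d, teichLift ξ e))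
      (y₂ := (teichLift ξ d', teichLift ξ e')) ⟨hGR.teichLift_mem d, hGR.teichLift_mem e, rfl⟩
      ⟨hGR.teichLift_mem d', hGR.teichLift_mem e', h⟩
    simp only [Prod.mk.injEq] at this
    exact Prod.ext (hGR.teichLift_injective this.1) (hGR.teichLift_injective this.2)
  · obtain ⟨⟨a, b⟩, ⟨ha, hb, rfl⟩, -⟩ := hGR.decomp A
    exact ⟨(π a, π b), by simp [ofTeichDigits, hGR.teichLift_mk ha, hGR.teichLift_mk hb]⟩

theorem ofTeichDigits_zero : ofTeichDigits ξ (0 : 𝔽 × 𝔽) = 0 := by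
  simp [ofTeichDigits, hGR.teichLift_zero]

theorem neg_ofTeichDigits (d e : 𝔽) : -ofTeichDigits ξ (d, e) = ofTeichDigits ξ (d, d + e) := by
  simp only [ofTeichDigits]
  rw [hGR.two_mul_teichLift_add]
  linear_combination (-(teichLift ξ d) - teichLift ξ e) * hGR.four_eq_zero

theorem ofTeichDigits_sq_add_ofTeichDigits_sq (a b s : 𝔽) :
    ofTeichDigits ξ (a ^ 2, s) + ofTeichDigits ξ (b ^ 2, s) =
      ofTeichDigits ξ (a ^ 2 + b ^ 2, a * b) := by
  simp only [ofTeichDigits]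
  linear_combination hGR.teichLift_sq_add_teichLift_sq a b + teichLift ξ s * hGR.four_eq_zero

theorem teichLift_mul_ofTeichDigits (c : 𝔽) (p : 𝔽 × 𝔽) :
    teichLift ξ c * ofTeichDigits ξ p = ofTeichDigits ξ (c • p) := by
  simp only [ofTeichDigits, Prod.smul_fst, Prod.smul_snd, smul_eq_mul, hGR.teichLift_mul]
  ring

theorem image_ofTeichDigits_ne_zero :
    ofTeichDigits ξ '' {p | p ≠ 0} = {x | x ≠ 0} := by
  rw [← compl_singleton_eq, ← compl_singleton_eq, image_compl_eq hGR.ofTeichDigits_bijective,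
    image_singleton, hGR.ofTeichDigits_zero]

theorem mk_ne_zero_of_mem_teich {x : R} (hx : x ∈ Teich ξ) (hx0 : x ≠ 0) : π x ≠ 0 :=
  fun h => hx0 (by rw [← hGR.teichLift_mk hx, h, hGR.teichLift_zero])

theorem image_ofTeichDigits_triple (α : 𝔽) :
    ofTeichDigits ξ '' triple α = {teichLift ξ α, 2 * teichLift ξ α, 3 * teichLift ξ α} := by
  simp only [triple, image_insert_eq, image_singleton, ofTeichDigits, hGR.teichLift_zero, mul_zero,
    add_zero, zero_add]
  congr 3
  ring

theorem delta_pos : 0 < Δ := by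
  refine Nat.pos_of_ne_zero fun h => hGR.two_ne_zero ?_
  have : Nat.card R = 1 := by rw [hGR.card, h, pow_zero]
  exact (Nat.card_eq_one_iff_unique.1 this).1.elim _ _

theorem isUnit_of_mem_teich {a : R} (ha : a ∈ Teich ξ) (h0 : a ≠ 0) : IsUnit a := by
  rcases ha with rfl | ⟨i, rfl⟩
  · exact absurd rfl h0
  have hξ : IsOfFinOrder ξ := by
    rw [← orderOf_pos_iff, hGR.ord, Nat.sub_pos_iff_lt]
    exact Nat.one_lt_two_pow hGR.delta_pos.ne'
  exact hξ.isUnit.pow i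

theorem isField_residue : IsField 𝔽 where
  exists_pair_ne := ⟨0, 1, fun h => hGR.two_ne_zero <| by
    have h01 : (0 : R) = 1 := hGR.injOn_mk_teich zero_mem_teich one_mem_teich (by simpa using h)
    rw [← mul_one (2 : R), ← h01, mul_zero]⟩
  mul_comm := mul_comm
  mul_inv_cancel {z} hz := by
    have h0 : teichLift ξ z ≠ 0 := fun h => hz (by rw [← hGR.mk_teichLift z, h, map_zero])
    obtain ⟨u, hu⟩ := hGR.isUnit_of_mem_teich (hGR.teichLift_mem z) h0
    exact ⟨π ↑u⁻¹, by rw [← hGR.mk_teichLift z, ← hu, ← map_mul, u.mul_inv, map_one]⟩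

theorem card_residue : Nat.card 𝔽 = 2 ^ Δ := by
  have h := Nat.card_eq_of_bijective _ hGR.ofTeichDigits_bijective
  rw [Nat.card_prod, hGR.card, show 4 ^ Δ = 2 ^ Δ * 2 ^ Δ by rw [← mul_pow]; norm_num] at h
  exact Nat.mul_self_inj.1 h

theorem finite_residue : Finite 𝔽 :=
  Nat.finite_of_card_ne_zero (by rw [hGR.card_residue]; positivity)

end IsGaloisRing4

end Teichmuller

theorem exists_invariant_partition_general (Δ : ℕ) (hΔodd : Odd Δ)
    {R : Type*} [CommRing R] (ξ : R) (hGR : IsGaloisRing4 Δ ξ) :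
    ∃ P : Set (Set R),
      ⋃₀ P = {x : R | x ≠ 0} ∧
      P.PairwiseDisjoint id ∧
      (∀ C ∈ P,
        (∃ a : R, C = {a, 2 * a, 3 * a} ∧ C.ncard = 3) ∨
        (∃ a b : R, C = {a, b, -a - b, -a, -b, a + b} ∧ C.ncard = 6)) ∧
      {C ∈ P | C.ncard = 3}.ncard = 2 ^ Δ - 1 ∧
      {C ∈ P | C.ncard = 6}.ncard = (2 ^ Δ - 1) * (2 ^ Δ - 2) / 6 ∧
      (∀ x ∈ Teich ξ, x ≠ 0 → ∀ C ∈ P, (fun y => x * y) '' C ∈ P) := by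
  let := hGR.isField_residue.toField
  have := hGR.finite_residue
  have : CharP (R ⧸ Ideal.span {(2 : R)}) 2 :=
    CharTwo.of_one_ne_zero_of_two_eq_zero one_ne_zero residue_two_eq_zero
  have hF := sq_add_self_ne_one_of_odd hGR.card_residue hΔodd
  have hinj := hGR.ofTeichDigits_bijective.injective
  refine ⟨image (ofTeichDigits ξ) '' cells _, ?_,
    (pairwiseDisjoint_cells hF).image_of_injective hinj, ?_, ?_, ?_, ?_⟩
  · rw [← image_sUnion, sUnion_cells hF, hGR.image_ofTeichDigits_ne_zero]
  · rintro _ ⟨C, ⟨α, hα, rfl⟩ | ⟨α, β, hα, hβ, hαβ, rfl⟩, rfl⟩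
    · exact Or.inl ⟨_, hGR.image_ofTeichDigits_triple α,
        by rw [ncard_image_of_injective _ hinj, ncard_triple hα]⟩
    · obtain ⟨x, y, h⟩ := exists_image_sextuple_eq hGR.neg_ofTeichDigits
        hGR.ofTeichDigits_sq_add_ofTeichDigits_sq α β
      exact Or.inr ⟨x, y, h, by rw [ncard_image_of_injective _ hinj, ncard_sextuple hα hβ hαβ]⟩
  · rw [ncard_sep_image_image hinj, ncard_cells_three, hGR.card_residue]
  · rw [ncard_sep_image_image hinj, ncard_cells_six hF, hGR.card_residue]
  · rintro x hx hx0 _ ⟨C, hC, rfl⟩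
    refine ⟨_, image_smul_mem_cells (hGR.mk_ne_zero_of_mem_teich hx hx0) hC, ?_⟩
    rw [image_image, image_image]
    simp_rw [← hGR.teichLift_mul_ofTeichDigits, hGR.teichLift_mk hx]

theorem exists_invariant_partition (Δ : ℕ) (hΔodd : Odd Δ) (hΔ : 1 < Δ)
    {R : Type*} [CommRing R] (ξ : R) (hGR : IsGaloisRing4 Δ ξ) :
    ∃ P : Set (Set R),
      ⋃₀ P = {x : R | x ≠ 0} ∧
      P.PairwiseDisjoint id ∧
      (∀ C ∈ P,
        (∃ a : R, C = {a, 2 * a, 3 * a} ∧ C.ncard = 3) ∨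
        (∃ a b : R, C = {a, b, -a - b, -a, -b, a + b} ∧ C.ncard = 6)) ∧
      {C ∈ P | C.ncard = 3}.ncard = 2 ^ Δ - 1 ∧
      {C ∈ P | C.ncard = 6}.ncard = (2 ^ Δ - 1) * (2 ^ Δ - 2) / 6 ∧
      (∀ x ∈ Teich ξ, x ≠ 0 → ∀ C ∈ P, (fun y => x * y) '' C ∈ P) :=
  exists_invariant_partition_general Δ hΔodd ξ hGR
end

section
/- Let Δ be odd, Δ > 1, with 2-adic structure as follows: suppose we have a partition P of GR(4^Δ)\{0} into triples {a,2a,3a} and sixtuples {±a, ±b, ±(a+b)}. Form the Z_4-matrix H whose columns are, for each sixtuple, a chosen pair (a,b), and for each triple, the element a (viewed as vectors in Z_4^Δ). Then the code C = {c : Hc^T = 0} is a 1-perfect code in the Doob graph D(m, n), where m is the number of sixtuples and n the number of triples. -/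
/-- Vertices of the Doob graph `D(m,n)`: `m` Shrikhande coordinates (pairs over `ZMod 4`)
and `n` `K₄` coordinates (single `ZMod 4` values); identified with `Z₄^{2m+n}`. -/
abbrev DoobVertex (m n : ℕ) := (Fin m → ZMod 4 × ZMod 4) × (Fin n → ZMod 4)

/-- The connecting set of the Shrikhande graph, a Cayley graph on `Z₄²`. -/
def shrikConn : Set (ZMod 4 × ZMod 4) :=
  {(0, 1), (0, 3), (1, 0), (3, 0), (1, 1), (3, 3)}

/-- The connecting set of the Doob graph `D(m,n)` as a Cayley graph on `Z₄^{2m+n}`: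
nonzero in exactly one coordinate, where the value lies in the connecting set of the
Shrikhande graph (for the first `m` coordinates) or is an arbitrary nonzero element
of `Z₄` (for the last `n` coordinates). -/
def doobConn (m n : ℕ) : Set (DoobVertex m n) :=
  {v | (∃ i, v.1 i ∈ shrikConn ∧ (∀ i', i' ≠ i → v.1 i' = 0) ∧ v.2 = 0) ∨
       (∃ j, v.2 j ≠ 0 ∧ (∀ j', j' ≠ j → v.2 j' = 0) ∧ v.1 = 0)}

/-- The Doob graph `D(m,n)`: the Cartesian product of `m` Shrikhande graphs and
`n` copies of `K₄`, realized as a Cayley graph on `Z₄^{2m+n}`. -/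
def doobGraph (m n : ℕ) : SimpleGraph (DoobVertex m n) where
  Adj u v := u ≠ v ∧ (u - v ∈ doobConn m n ∨ v - u ∈ doobConn m n)
  symm := ⟨fun u v h => ⟨h.1.symm, h.2.symm⟩⟩
  loopless := ⟨fun u h => h.1 rfl⟩

/-- A 1-perfect code: every vertex is at distance at most 1 from exactly one codeword. -/
def IsPerfect1Code {V : Type*} (G : SimpleGraph V) (C : Set V) : Prop :=
  ∀ v : V, ∃! c : V, c ∈ C ∧ (v = c ∨ G.Adj v c)

/-!
The syndrome map `σ v = H vᵀ` is additive and the code is its kernel. Each sixtuple is the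
image under `σ` of the Shrikhande neighbourhood of `0` in one coordinate, each triple that of the
`K₄` neighbourhood in another, and the cardinality hypotheses make `σ` injective on each of these
blocks. The partition hypothesis therefore says that `σ` maps the connecting set of the Doob
graph bijectively onto the nonzero syndromes. A vertex with zero syndrome is then the only
codeword in its ball, and a vertex `v` with nonzero syndrome has the unique codeword `v - e`
in its ball, where `e` is the connecting element with `σ e = σ v`.
-/

theorem isPerfect1Code_fromRel_of_bijOn {G H : Type*} [AddCommGroup G] [AddGroup H] {S : Set G}
    (hS : ∀ e ∈ S, -e ∈ S) {σ : G →+ H} (hσ : Set.BijOn σ S {0}ᶜ) :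
    IsPerfect1Code (SimpleGraph.fromRel fun u v => u - v ∈ S) {v | σ v = 0} := by
  have adj_iff : ∀ u v, (SimpleGraph.fromRel fun u v => u - v ∈ S).Adj u v ↔ u - v ∈ S := by
    intro u v
    rw [SimpleGraph.fromRel_adj]
    refine ⟨fun ⟨_, h⟩ => h.elim id fun h => neg_sub v u ▸ hS _ h,
      fun h => ⟨?_, .inl h⟩⟩
    rintro rfl
    exact hσ.mapsTo (sub_self u ▸ h) (map_zero σ)
  intro v
  by_cases hv : σ v = 0
  · refine ⟨v, ⟨hv, .inl rfl⟩, ?_⟩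
    rintro c ⟨hc, rfl | hadj⟩
    · rfl
    · exact absurd (by simp [map_sub, hv, hc.out]) (hσ.mapsTo ((adj_iff v c).1 hadj))
  · obtain ⟨e, he, hev⟩ := hσ.surjOn hv
    have hcode : σ (v - e) = 0 := by simp [map_sub, hev]
    refine ⟨v - e, ⟨hcode, .inr ((adj_iff _ _).2 (by rwa [sub_sub_cancel]))⟩, ?_⟩
    rintro c ⟨hc, rfl | hadj⟩
    · exact absurd hc hv
    · have hvc : v - c = e := hσ.injOn ((adj_iff v c).1 hadj) he (by simp [map_sub, hc.out, hev])
      rw [← hvc, sub_sub_cancel]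

theorem Set.bijOn_iUnion_of_existsUnique {α β ι : Type*} {f : α → β} {s : ι → Set α}
    {t : Set β} (hinj : ∀ k, Set.InjOn f (s k)) (hmaps : ∀ k, Set.MapsTo f (s k) t)
    (hpart : ∀ y ∈ t, ∃! k, y ∈ f '' s k) : Set.BijOn f (⋃ k, s k) t := by
  refine ⟨Set.mapsTo_iUnion.2 hmaps, ?_, fun y hy => ?_⟩
  · intro x hx x' hx' hxx'
    obtain ⟨k, hk⟩ := Set.mem_iUnion.1 hx
    obtain ⟨k', hk'⟩ := Set.mem_iUnion.1 hx'
    obtain rfl : k = k' := (hpart _ (hmaps k hk)).unique ⟨x, hk, rfl⟩ ⟨x', hk', hxx'.symm⟩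
    exact hinj k hk hk' hxx'
  · obtain ⟨k, ⟨x, hx, rfl⟩, -⟩ := hpart y hy
    exact ⟨x, Set.mem_iUnion.2 ⟨k, hx⟩, rfl⟩

theorem zero_notMem_image_of_injOn {G H : Type*} [AddCancelMonoid G] [AddMonoid H] {σ : G →+ H}
    {s : Set G} (hσ : Set.InjOn σ s) (hs : ∀ p ∈ s, ∃ q ∈ s, p + q ∈ s) (h0 : 0 ∉ s) :
    0 ∉ σ '' s := by
  rintro ⟨p, hp, hσp⟩
  obtain ⟨q, hq, hpq⟩ := hs p hp
  have : p + q = q := hσ hpq hq (by rw [map_add, hσp, zero_add])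
  exact h0 (add_eq_right.mp this ▸ hp)

theorem shrikConn_eq_coe_finset :
    shrikConn =
      ↑({(0, 1), (0, 3), (1, 0), (3, 0), (1, 1), (3, 3)} : Finset (ZMod 4 × ZMod 4)) := by
  ext p
  simp [shrikConn]

theorem neg_mem_shrikConn : ∀ p ∈ shrikConn, -p ∈ shrikConn := by
  rw [shrikConn_eq_coe_finset]
  decide

theorem exists_add_mem_shrikConn :
    ∀ p ∈ shrikConn, ∃ q ∈ shrikConn, p + q ∈ shrikConn := by
  rw [shrikConn_eq_coe_finset]
  decide

theorem zero_notMem_shrikConn : (0 : ZMod 4 × ZMod 4) ∉ shrikConn := by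
  rw [shrikConn_eq_coe_finset]
  decide

theorem ncard_shrikConn : shrikConn.ncard = 6 := by
  rw [shrikConn_eq_coe_finset, Set.ncard_coe_finset]
  rfl

theorem ncard_compl_zero_zmod_four : ({0}ᶜ : Set (ZMod 4)).ncard = 3 := by
  rw [Set.ncard_compl, Set.ncard_singleton, Nat.card_zmod]

theorem image_shrikConn {M : Type*} [AddCommGroup M] [Module (ZMod 4) M] (a b : M) :
    (fun p : ZMod 4 × ZMod 4 => p.1 • a + p.2 • b) '' shrikConn =
      {a, b, -a - b, -a, -b, a + b} := by
  have h3 : (3 : ZMod 4) = -1 := rfl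
  simp only [shrikConn, Set.image_insert_eq, Set.image_singleton, h3, neg_smul, one_smul,
    zero_smul, zero_add, add_zero, ← sub_eq_add_neg, zero_sub]
  ext x
  simp only [Set.mem_insert_iff, Set.mem_singleton_iff]
  tauto

theorem image_compl_zero_zmod_four {M : Type*} [AddCommGroup M] [Module (ZMod 4) M] (x : M) :
    (fun c : ZMod 4 => c • x) '' {0}ᶜ = {x, 2 • x, 3 • x} := by
  have h : ({0}ᶜ : Set (ZMod 4)) = {1, 2, 3} := by
    ext c
    simp only [Set.mem_compl_iff, Set.mem_singleton_iff, Set.mem_insert_iff]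
    revert c
    decide
  simp only [h, Set.image_insert_eq, Set.image_singleton, one_smul, ofNat_smul_eq_nsmul]

section Doob

variable {m n : ℕ}

theorem doobGraph_eq_fromRel :
    doobGraph m n = SimpleGraph.fromRel fun u v => u - v ∈ doobConn m n :=
  SimpleGraph.ext rfl

def doobBlock : Fin m ⊕ Fin n → Set (DoobVertex m n) :=
  Sum.elim (fun i => (fun p => (Pi.single i p, 0)) '' shrikConn)
    (fun j => (fun c => (0, Pi.single j c)) '' {0}ᶜ)

theorem doobConn_eq_iUnion_doobBlock : doobConn m n = ⋃ k, doobBlock k := by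
  ext e
  constructor
  · rintro (⟨i, hp, hz, h2⟩ | ⟨j, hc, hz, h1⟩)
    · refine Set.mem_iUnion.2 ⟨.inl i, e.1 i, hp, Prod.ext (funext fun i' => ?_) h2.symm⟩
      by_cases h : i' = i
      · subst h; simp
      · simp [h, hz i' h]
    · refine Set.mem_iUnion.2 ⟨.inr j, e.2 j, hc, Prod.ext h1.symm (funext fun j' => ?_)⟩
      by_cases h : j' = j
      · subst h; simp
      · simp [h, hz j' h]
  · rintro ⟨_, ⟨i | j, rfl⟩, ⟨p, hp, rfl⟩⟩
    · exact .inl ⟨i, by simpa using hp, fun i' h => by simp [h], rfl⟩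
    · exact .inr ⟨j, by simpa using hp, fun j' h => by simp [h], rfl⟩

theorem neg_mem_doobConn : ∀ e ∈ doobConn m n, -e ∈ doobConn m n := by
  rintro e (⟨i, hp, hz, h2⟩ | ⟨j, hc, hz, h1⟩)
  · exact .inl ⟨i, neg_mem_shrikConn _ hp, fun i' h => by simp [hz i' h], by simp [h2]⟩
  · exact .inr ⟨j, neg_ne_zero.2 hc, fun j' h => by simp [hz j' h], by simp [h1]⟩

theorem zero_notMem_doobBlock (k : Fin m ⊕ Fin n) : 0 ∉ doobBlock k := by
  rcases k with i | j
  · rintro ⟨p, hp, h⟩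
    obtain rfl : p = 0 := by simpa using congrArg (fun e => e.1 i) h
    exact zero_notMem_shrikConn hp
  · rintro ⟨c, hc, h⟩
    exact hc (by simpa using congrArg (fun e => e.2 j) h)

theorem exists_add_mem_doobBlock (k : Fin m ⊕ Fin n) :
    ∀ e ∈ doobBlock k, ∃ e' ∈ doobBlock k, e + e' ∈ doobBlock k := by
  rcases k with i | j
  · rintro _ ⟨p, hp, rfl⟩
    obtain ⟨q, hq, hpq⟩ := exists_add_mem_shrikConn p hp
    exact ⟨_, ⟨q, hq, rfl⟩, p + q, hpq, by simp [Pi.single_add]⟩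
  · rintro _ ⟨c, hc, rfl⟩
    obtain ⟨d, hd, hcd⟩ : ∃ d : ZMod 4, d ≠ 0 ∧ c + d ≠ 0 := by revert c; decide
    exact ⟨_, ⟨d, hd, rfl⟩, c + d, hcd, by simp [Pi.single_add]⟩

theorem ncard_doobBlock_inl (i : Fin m) : (doobBlock (.inl i : Fin m ⊕ Fin n)).ncard = 6 := by
  have hinj : (fun p => ((Pi.single i p, 0) : DoobVertex m n)).Injective := fun _ _ h =>
    Pi.single_injective i (congrArg Prod.fst h)
  rw [doobBlock, Sum.elim_inl, Set.ncard_image_of_injective _ hinj, ncard_shrikConn]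

theorem ncard_doobBlock_inr (j : Fin n) : (doobBlock (.inr j : Fin m ⊕ Fin n)).ncard = 3 := by
  have hinj : (fun c => ((0, Pi.single j c) : DoobVertex m n)).Injective := fun _ _ h =>
    Pi.single_injective j (congrArg Prod.snd h)
  rw [doobBlock, Sum.elim_inr, Set.ncard_image_of_injective _ hinj, ncard_compl_zero_zmod_four]

variable {M : Type*} [AddCommGroup M] [Module (ZMod 4) M] (A B : Fin m → M) (t : Fin n → M)

def syndrome : DoobVertex m n →+ M where
  toFun v := (∑ i : Fin m, ((v.1 i).1 • A i + (v.1 i).2 • B i)) + ∑ j : Fin n, v.2 j • t j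
  map_zero' := by simp
  map_add' u v := by
    simp only [Prod.fst_add, Prod.snd_add, Pi.add_apply, add_smul, Finset.sum_add_distrib]
    abel

theorem syndrome_single_inl (i : Fin m) (p : ZMod 4 × ZMod 4) :
    syndrome A B t (Pi.single i p, 0) = p.1 • A i + p.2 • B i := by
  simp [syndrome, Pi.single_apply, apply_ite Prod.fst, apply_ite Prod.snd, ite_smul,
    Finset.sum_add_distrib]

theorem syndrome_single_inr (j : Fin n) (c : ZMod 4) :
    syndrome A B t (0, Pi.single j c) = c • t j := by
  simp [syndrome, Pi.single_apply]

theorem image_syndrome_doobBlock :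
    ∀ k, syndrome A B t '' doobBlock k = Sum.elim
      (fun i => ({A i, B i, -A i - B i, -A i, -B i, A i + B i} : Set M))
      (fun j => ({t j, 2 • t j, 3 • t j} : Set M)) k := by
  rintro (i | j)
  · simp only [doobBlock, Sum.elim_inl, Set.image_image, syndrome_single_inl, image_shrikConn]
  · simp only [doobBlock, Sum.elim_inr, Set.image_image, syndrome_single_inr,
      image_compl_zero_zmod_four]

end Doob

theorem perfect_code_from_partition_general (Δ m n : ℕ)
    (A B : Fin m → (Fin Δ → ZMod 4)) (t : Fin n → (Fin Δ → ZMod 4))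
    -- the sixtuples and triples built from the columns of the check matrix
    (parts : Fin m ⊕ Fin n → Set (Fin Δ → ZMod 4))
    (hparts : parts = Sum.elim
      (fun i => ({A i, B i, -A i - B i, -A i, -B i, A i + B i} : Set (Fin Δ → ZMod 4)))
      (fun j => ({t j, 2 • t j, 3 • t j} : Set (Fin Δ → ZMod 4))))
    -- they have full size
    (hsix : ∀ i : Fin m, (parts (Sum.inl i)).ncard = 6)
    (htri : ∀ j : Fin n, (parts (Sum.inr j)).ncard = 3)
    -- and they partition `GR(4^Δ) \ {0} = Z₄^Δ \ {0}`
    (hpartition : ∀ x : Fin Δ → ZMod 4, x ≠ 0 → ∃! k : Fin m ⊕ Fin n, x ∈ parts k) :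
    IsPerfect1Code (doobGraph m n)
      {v : DoobVertex m n |
        (∑ i : Fin m, ((v.1 i).1 • A i + (v.1 i).2 • B i)) +
        (∑ j : Fin n, v.2 j • t j) = 0} := by
  set σ := syndrome A B t
  rw [← funext (image_syndrome_doobBlock A B t)] at hparts
  subst hparts
  have hinj : ∀ k, Set.InjOn σ (doobBlock k) := by
    rintro (i | j)
    · exact Set.injOn_of_ncard_image_eq ((hsix i).trans (ncard_doobBlock_inl i).symm)
    · exact Set.injOn_of_ncard_image_eq ((htri j).trans (ncard_doobBlock_inr j).symm)
  have hmaps : ∀ k, Set.MapsTo σ (doobBlock k) {0}ᶜ := fun k e he h0 =>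
    zero_notMem_image_of_injOn (hinj k) (exists_add_mem_doobBlock k) (zero_notMem_doobBlock k)
      ⟨e, he, h0⟩
  have hbij : Set.BijOn σ (doobConn m n) {0}ᶜ := by
    rw [doobConn_eq_iUnion_doobBlock]
    exact Set.bijOn_iUnion_of_existsUnique hinj hmaps hpartition
  rw [doobGraph_eq_fromRel]
  exact isPerfect1Code_fromRel_of_bijOn neg_mem_doobConn hbij

theorem perfect_code_from_partition (Δ m n : ℕ) (hΔodd : Odd Δ) (hΔ : 1 < Δ)
    (A B : Fin m → (Fin Δ → ZMod 4)) (t : Fin n → (Fin Δ → ZMod 4))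
    -- the sixtuples and triples built from the columns of the check matrix
    (parts : Fin m ⊕ Fin n → Set (Fin Δ → ZMod 4))
    (hparts : parts = Sum.elim
      (fun i => ({A i, B i, -A i - B i, -A i, -B i, A i + B i} : Set (Fin Δ → ZMod 4)))
      (fun j => ({t j, 2 • t j, 3 • t j} : Set (Fin Δ → ZMod 4))))
    -- they have full size
    (hsix : ∀ i : Fin m, (parts (Sum.inl i)).ncard = 6)
    (htri : ∀ j : Fin n, (parts (Sum.inr j)).ncard = 3)
    -- and they partition `GR(4^Δ) \ {0} = Z₄^Δ \ {0}`
    (hpartition : ∀ x : Fin Δ → ZMod 4, x ≠ 0 → ∃! k : Fin m ⊕ Fin n, x ∈ parts k) :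
    IsPerfect1Code (doobGraph m n)
      {v : DoobVertex m n |
        (∑ i : Fin m, ((v.1 i).1 • A i + (v.1 i).2 • B i)) +
        (∑ j : Fin n, v.2 j • t j) = 0} :=
  perfect_code_from_partition_general Δ m n A B t parts hparts hsix htri hpartition
end
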